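/- For any game ν on N and every y ∈ ℝ, P(Y_ν ≤ y) = (1/n!) · Σ_{σ ∈ 𝔖_n} P(Y_ν^σ ≤ y). -/

import Mathlib

open MeasureTheory ProbabilityTheory Finset

noncomputable section

namespace ChoquetPaper

variable {n : ℕ} {Ω : Type*}

/-- `ν_i^σ := ν({σ(1),…,σ(i)})` (here `i : ℕ`, `0 ≤ i ≤ n`). -/
def nuSig (ν : Finset (Fin n) → ℝ) (σ : Equiv.Perm (Fin n)) (i : ℕ) : ℝ :=
  ν ((Finset.univ.filter (fun j : Fin n => (j : ℕ) < i)).image σ)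

/-- The Choquet sum `Σ_{i=1}^n p_i^{ν,σ} x_{σ(i)}` w.r.t. a fixed permutation `σ`. -/
def choquetPerm (ν : Finset (Fin n) → ℝ) (σ : Equiv.Perm (Fin n)) (x : Fin n → ℝ) : ℝ :=
  ∑ i : Fin n, (nuSig ν σ ((i : ℕ) + 1) - nuSig ν σ (i : ℕ)) * x (σ i)

/-- A permutation `σ` such that `x_{σ(1)} ≥ ⋯ ≥ x_{σ(n)}`. -/
def sortDesc (x : Fin n → ℝ) : Equiv.Perm (Fin n) :=
  (Fin.revPerm).trans (Tuple.sort x)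

/-- The discrete Choquet integral `C_ν(x)`. -/
def choquet (ν : Finset (Fin n) → ℝ) (x : Fin n → ℝ) : ℝ :=
  choquetPerm ν (sortDesc x) x

/-- The `i`-th order statistic `X_{i:n}` (1-based), with the convention `X_{0:n} := 0`. -/
def orderStat (X : Fin n → Ω → ℝ) (i : ℕ) (ω : Ω) : ℝ :=
  if h : i - 1 < n ∧ 1 ≤ i then X (Tuple.sort (fun j => X j ω) ⟨i - 1, h.1⟩) ω else 0

/-- `Y_ν^σ := Σ_{i=1}^n p_i^{ν,σ} X_{n−i+1:n}`. -/
def Ysig (ν : Finset (Fin n) → ℝ) (σ : Equiv.Perm (Fin n)) (X : Fin n → Ω → ℝ) (ω : Ω) : ℝ :=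
  ∑ i : Fin n, (nuSig ν σ ((i : ℕ) + 1) - nuSig ν σ (i : ℕ)) * orderStat X (n - (i : ℕ)) ω

/-- plus truncated power function -/
def tpowPos (t : ℝ) (m : ℕ) : ℝ := if 0 < t then t ^ m else 0

/-- minus truncated power function -/
def tpowNeg (t : ℝ) (m : ℕ) : ℝ := if t < 0 then t ^ m else 0

/-- divided difference at pairwise distinct points indexed by a finite set -/
def ddiff {ι : Type*} [DecidableEq ι] (g : ℝ → ℝ) (s : Finset ι) (a : ι → ℝ) : ℝ :=
  ∑ i ∈ s, g (a i) / ∏ j ∈ s.erase i, (a i - a j)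


/-!
With `σ(x) := sortDesc x`, the Choquet integral is `C_ν(x) = Y_ν^{σ(x)}(x)`, so
`P(C_ν ≤ y) = Σ_σ P(σ(X) = σ, Y_ν^σ ≤ y)`. The event `{Y_ν^σ ≤ y}` depends only on the order
statistics, hence is invariant under permuting the coordinates of the sample, and so is the law
of the i.i.d. sample. Absolute continuity rules out ties almost surely, and off the ties permuting
the coordinates permutes the events `{σ(X) = ρ}` transitively. So these `n!` events cut
`{Y_ν^σ ≤ y}` into pieces of equal probability.
-/

theorem measurable_of_measurableSet_fiber {α β ι : Type*} [MeasurableSpace α] [MeasurableSpace β]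
    [Countable ι] {p : α → ι} (hp : ∀ i, MeasurableSet (p ⁻¹' {i})) {g : ι → α → β}
    (hg : ∀ i, Measurable (g i)) : Measurable fun x => g (p x) x := by
  let _ : MeasurableSpace ι := ⊤
  exact (measurable_from_prod_countable_right (f := fun q : ι × α => g q.1 q.2) hg).comp
    ((measurable_to_countable' hp).prodMk measurable_id)

section Sorting

theorem measurableSet_sort_eq (π : Equiv.Perm (Fin n)) :
    MeasurableSet {x : Fin n → ℝ | Tuple.sort x = π} := by
  have h : {x : Fin n → ℝ | Tuple.sort x = π} =
      (⋂ (i : Fin n) (j : Fin n) (_ : i ≤ j), {x | x (π i) ≤ x (π j)}) ∩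
      ⋂ (i : Fin n) (j : Fin n) (_ : i < j) (_ : ¬ π i < π j), {x | x (π i) = x (π j)}ᶜ := by
    ext x
    simp only [Set.mem_ofPred_eq, Set.mem_inter_iff, Set.mem_iInter, Set.mem_compl_iff]
    rw [eq_comm, Tuple.eq_sort_iff]
    exact and_congr Iff.rfl ⟨fun h i j hij hlt heq => hlt (h i j hij heq),
      fun h i j hij heq => by_contra fun hlt => h i j hij hlt heq⟩
  rw [h]
  refine .inter (.iInter fun i => .iInter fun j => .iInter fun _ => ?_)
    (.iInter fun i => .iInter fun j => .iInter fun _ => .iInter fun _ => ?_)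
  · exact measurableSet_le (measurable_pi_apply _) (measurable_pi_apply _)
  · exact (measurableSet_eq_fun (measurable_pi_apply (π i)) (measurable_pi_apply (π j))).compl

theorem measurableSet_sortDesc_eq (σ : Equiv.Perm (Fin n)) :
    MeasurableSet {x : Fin n → ℝ | sortDesc x = σ} := by
  convert measurableSet_sort_eq (Fin.revPerm.symm.trans σ) using 1
  ext x
  simp only [Set.mem_ofPred_eq, sortDesc, Equiv.ext_iff, Equiv.trans_apply]
  exact ⟨fun h i => by simpa using h (Fin.revPerm i), fun h i => by simpa using h (Fin.revPerm i)⟩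

theorem sort_comp_perm_of_injective {x : Fin n → ℝ} (hx : Function.Injective x)
    (τ : Equiv.Perm (Fin n)) : Tuple.sort (x ∘ τ) = (Tuple.sort x).trans τ⁻¹ := by
  refine (Tuple.eq_sort_iff.mpr ⟨?_, fun i j hij heq => ?_⟩).symm
  · convert Tuple.monotone_sort x using 1
    ext j
    simp
  · exact absurd (((Tuple.sort x).trans τ⁻¹).injective (τ.injective (hx heq))) hij.ne

theorem sortDesc_comp_perm_of_injective {x : Fin n → ℝ} (hx : Function.Injective x)
    (τ : Equiv.Perm (Fin n)) : sortDesc (x ∘ τ) = (sortDesc x).trans τ⁻¹ := by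
  rw [sortDesc, sort_comp_perm_of_injective hx τ, sortDesc, Equiv.trans_assoc]

end Sorting

section OrderStatistics

variable (ν : Finset (Fin n) → ℝ) (σ : Equiv.Perm (Fin n))

/-- `orderStat` as a function of the sample vector. -/
def orderStatOf (i : ℕ) (x : Fin n → ℝ) : ℝ :=
  if h : i - 1 < n ∧ 1 ≤ i then x (Tuple.sort x ⟨i - 1, h.1⟩) else 0

/-- `Ysig` as a function of the sample vector. -/
def ysigOf (x : Fin n → ℝ) : ℝ :=
  ∑ i : Fin n, (nuSig ν σ ((i : ℕ) + 1) - nuSig ν σ (i : ℕ)) * orderStatOf (n - (i : ℕ)) x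

theorem measurable_orderStatOf (i : ℕ) : Measurable (orderStatOf (n := n) i) := by
  unfold orderStatOf
  split_ifs with h
  · exact measurable_of_measurableSet_fiber (p := Tuple.sort) (g := fun π x => x (π _))
      measurableSet_sort_eq fun π => measurable_pi_apply _
  · exact measurable_const

theorem orderStatOf_comp_perm (τ : Equiv.Perm (Fin n)) (x : Fin n → ℝ) (i : ℕ) :
    orderStatOf i (x ∘ τ) = orderStatOf i x := by
  unfold orderStatOf
  split_ifs
  · exact congrFun (Tuple.comp_perm_comp_sort_eq_comp_sort (f := x) (σ := τ)) _
  · rfl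

theorem measurable_ysigOf : Measurable (ysigOf ν σ) :=
  Finset.measurable_sum _ fun _ _ => (measurable_orderStatOf _).const_mul _

theorem ysigOf_comp_perm (τ : Equiv.Perm (Fin n)) (x : Fin n → ℝ) :
    ysigOf ν σ (x ∘ τ) = ysigOf ν σ x := by
  simp only [ysigOf, orderStatOf_comp_perm]

theorem choquet_eq_ysigOf_sortDesc (x : Fin n → ℝ) : choquet ν x = ysigOf ν (sortDesc x) x := by
  unfold choquet choquetPerm ysigOf
  refine Finset.sum_congr rfl fun i _ => congrArg _ ?_
  have hi : n - (i : ℕ) - 1 < n ∧ 1 ≤ n - (i : ℕ) := by omega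
  rw [orderStatOf, dif_pos hi, sortDesc, Equiv.trans_apply, Fin.revPerm_apply]
  rfl

theorem measurable_choquet : Measurable (choquet ν) := by
  simp_rw [funext (choquet_eq_ysigOf_sortDesc ν)]
  exact measurable_of_measurableSet_fiber measurableSet_sortDesc_eq (measurable_ysigOf ν)

end OrderStatistics

section Exchangeable

open scoped ENNReal

theorem ae_injective_of_measure_eq_zero {ι β : Type*} [Countable ι] [MeasurableSpace β]
    {Q : Measure (ι → β)} (hties : ∀ i j, i ≠ j → Q {x | x i = x j} = 0) :
    ∀ᵐ x ∂Q, Function.Injective x := by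
  have h : ∀ᵐ x ∂Q, ∀ i j, x i = x j → i = j := by
    refine ae_all_iff.2 fun i => ae_all_iff.2 fun j => ?_
    by_cases hij : i = j
    · exact ae_of_all _ fun _ _ => hij
    · exact measure_mono_null (fun x hx => (Classical.not_imp.1 hx).1) (hties i j hij)
  filter_upwards [h] with x hx using fun i j => hx i j

theorem sum_measure_sortDesc_eq_inter (Q : Measure (Fin n → ℝ)) (S : Set (Fin n → ℝ)) :
    ∑ σ, Q ({x | sortDesc x = σ} ∩ S) = Q S := by
  calc ∑ σ, Q ({x | sortDesc x = σ} ∩ S) = ∑ σ, Q.restrict S (sortDesc ⁻¹' {σ}) :=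
        Finset.sum_congr rfl fun σ _ => (Measure.restrict_apply (measurableSet_sortDesc_eq σ)).symm
    _ = Q S := by
      rw [sum_measure_preimage_singleton _ fun σ _ => measurableSet_sortDesc_eq σ]
      simp

variable {Q : Measure (Fin n → ℝ)} {S : Set (Fin n → ℝ)}

theorem measure_sortDesc_eq_inter_eq_trans
    (hQ : ∀ τ : Equiv.Perm (Fin n), Q.map (fun x => x ∘ τ) = Q)
    (hinj : ∀ᵐ x ∂Q, Function.Injective x) (hS : MeasurableSet S)
    (hSinv : ∀ (τ : Equiv.Perm (Fin n)) x, x ∘ τ ∈ S ↔ x ∈ S) (σ τ : Equiv.Perm (Fin n)) :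
    Q ({x | sortDesc x = σ} ∩ S) = Q ({x | sortDesc x = σ.trans τ} ∩ S) := by
  have hτ : Measurable fun x : Fin n → ℝ => x ∘ τ :=
    measurable_pi_lambda _ fun i => measurable_pi_apply _
  conv_lhs => rw [← hQ τ, Measure.map_apply hτ ((measurableSet_sortDesc_eq σ).inter hS)]
  refine measure_congr ?_
  filter_upwards [hinj] with x hx
  change (sortDesc (x ∘ τ) = σ ∧ x ∘ τ ∈ S) = (sortDesc x = σ.trans τ ∧ x ∈ S)
  rw [sortDesc_comp_perm_of_injective hx, hSinv, ← Equiv.Perm.mul_def, ← Equiv.Perm.mul_def,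
    inv_mul_eq_iff_eq_mul]

theorem factorial_mul_measure_sortDesc_eq_inter
    (hQ : ∀ τ : Equiv.Perm (Fin n), Q.map (fun x => x ∘ τ) = Q)
    (hinj : ∀ᵐ x ∂Q, Function.Injective x) (hS : MeasurableSet S)
    (hSinv : ∀ (τ : Equiv.Perm (Fin n)) x, x ∘ τ ∈ S ↔ x ∈ S) (σ : Equiv.Perm (Fin n)) :
    (n.factorial : ℝ≥0∞) * Q ({x | sortDesc x = σ} ∩ S) = Q S := calc
  _ = ∑ τ : Equiv.Perm (Fin n), Q ({x | sortDesc x = σ} ∩ S) := by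
    rw [Finset.sum_const, Finset.card_univ, Fintype.card_perm, Fintype.card_fin, nsmul_eq_mul]
  _ = ∑ τ : Equiv.Perm (Fin n), Q ({x | sortDesc x = σ.trans τ} ∩ S) :=
    Finset.sum_congr rfl fun τ _ => measure_sortDesc_eq_inter_eq_trans hQ hinj hS hSinv σ τ
  _ = ∑ ρ, Q ({x | sortDesc x = ρ} ∩ S) := Fintype.sum_equiv (Equiv.mulRight σ) _ _ fun _ => rfl
  _ = Q S := sum_measure_sortDesc_eq_inter Q S

theorem factorial_mul_measure_choquet_le
    (hQ : ∀ τ : Equiv.Perm (Fin n), Q.map (fun x => x ∘ τ) = Q)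
    (hinj : ∀ᵐ x ∂Q, Function.Injective x) (ν : Finset (Fin n) → ℝ) (y : ℝ) :
    (n.factorial : ℝ≥0∞) * Q {x | choquet ν x ≤ y} = ∑ σ, Q {x | ysigOf ν σ x ≤ y} := by
  rw [← sum_measure_sortDesc_eq_inter Q {x | choquet ν x ≤ y}, Finset.mul_sum]
  refine Finset.sum_congr rfl fun σ _ => ?_
  rw [← factorial_mul_measure_sortDesc_eq_inter hQ hinj
    (measurableSet_le (measurable_ysigOf ν σ) measurable_const)
    (fun τ x => by simp only [Set.mem_ofPred_eq, ysigOf_comp_perm]) σ]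
  congr 2
  ext x
  exact and_congr_right fun h => by
    rw [Set.mem_ofPred_eq, Set.mem_ofPred_eq, choquet_eq_ysigOf_sortDesc, h]

end Exchangeable

theorem map_comp_perm_pi {ι β : Type*} [Fintype ι] [MeasurableSpace β] (m : ι → Measure β)
    [∀ i, SigmaFinite (m i)] (τ : Equiv.Perm ι) (hm : ∀ i, m (τ i) = m i) :
    (Measure.pi m).map (fun x => x ∘ τ) = Measure.pi m := by
  refine (measurePreserving_arrowCongr' m m τ.symm (MeasurableEquiv.refl β) fun i => ?_).map_eq
  rw [← hm (τ.symm i), Equiv.apply_symm_apply]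
  exact MeasurePreserving.id _

theorem measure_eq_eq_zero_of_indepFun [MeasurableSpace Ω] {P : Measure Ω} [IsFiniteMeasure P]
    {X Y : Ω → ℝ} (hX : Measurable X) (hY : Measurable Y) (hXY : IndepFun X Y P)
    [NullSingletonClass (P.map Y)] : P {ω | X ω = Y ω} = 0 := by
  have hdiag : MeasurableSet {p : ℝ × ℝ | p.1 = p.2} :=
    measurableSet_eq_fun measurable_fst measurable_snd
  have h : P {ω | X ω = Y ω} = P.map (fun ω => (X ω, Y ω)) {p | p.1 = p.2} := by
    rw [Measure.map_apply (hX.prodMk hY) hdiag]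
    rfl
  rw [h, (indepFun_iff_map_prod_eq_prod_map_map hX.aemeasurable hY.aemeasurable).1 hXY,
    Measure.prod_apply hdiag]
  simp

theorem statement1_general {Ω : Type*} [MeasurableSpace Ω] {n : ℕ}
    (P : Measure Ω) [IsProbabilityMeasure P]
    (ν : Finset (Fin n) → ℝ)
    (X : Fin n → Ω → ℝ) (hmeas : ∀ i, Measurable (X i))
    (hindep : iIndepFun X P)
    (μ : Measure ℝ) (hac : μ ≪ volume) (hdist : ∀ i, Measure.map (X i) P = μ)
    (y : ℝ) :
    (P {ω | choquet ν (fun i => X i ω) ≤ y}).toReal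
      = (1 / (Nat.factorial n : ℝ)) *
          ∑ σ : Equiv.Perm (Fin n), (P {ω | Ysig ν σ X ω ≤ y}).toReal := by
  set φ : Ω → Fin n → ℝ := fun ω i => X i ω
  have hφ : Measurable φ := measurable_pi_lambda _ hmeas
  have : ∀ i, NullSingletonClass (P.map (X i)) :=
    fun i => ⟨fun a => hdist i ▸ hac Real.volume_singleton⟩
  have hexch (τ : Equiv.Perm (Fin n)) : (P.map φ).map (fun x => x ∘ τ) = P.map φ := by
    rw [(iIndepFun_iff_map_fun_eq_pi_map fun i => (hmeas i).aemeasurable).1 hindep]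
    exact map_comp_perm_pi _ τ fun i => by rw [hdist, hdist]
  have hties (i j : Fin n) (hij : i ≠ j) : P.map φ {x | x i = x j} = 0 := by
    rw [Measure.map_apply hφ (measurableSet_eq_fun (measurable_pi_apply i) (measurable_pi_apply j))]
    exact measure_eq_eq_zero_of_indepFun (hmeas i) (hmeas j) (hindep.indepFun hij)
  have key := congrArg ENNReal.toReal
    (factorial_mul_measure_choquet_le hexch (ae_injective_of_measure_eq_zero hties) ν y)
  simp only [Measure.map_apply hφ (measurableSet_le (measurable_choquet ν) measurable_const),
    Measure.map_apply hφ (measurableSet_le (measurable_ysigOf ν _) measurable_const),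
    ENNReal.toReal_mul, ENNReal.toReal_natCast,
    ENNReal.toReal_sum fun _ _ => measure_ne_top _ _] at key
  rw [one_div, eq_inv_mul_iff_mul_eq₀ (by positivity)]
  exact key

/-- `P(Y_ν ≤ y) = (1/n!) · Σ_{σ ∈ 𝔖_n} P(Y_ν^σ ≤ y)`. -/
theorem statement1 {Ω : Type*} [MeasurableSpace Ω] {n : ℕ} (hn : 0 < n)
    (P : Measure Ω) [IsProbabilityMeasure P]
    (ν : Finset (Fin n) → ℝ) (hν0 : ν ∅ = 0) (hν01 : ∀ T, ν T ∈ Set.Icc (0:ℝ) 1)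
    (X : Fin n → Ω → ℝ) (hmeas : ∀ i, Measurable (X i))
    (hindep : iIndepFun X P)
    (μ : Measure ℝ) (hac : μ ≪ volume) (hdist : ∀ i, Measure.map (X i) P = μ)
    (y : ℝ) :
    (P {ω | choquet ν (fun i => X i ω) ≤ y}).toReal
      = (1 / (Nat.factorial n : ℝ)) *
          ∑ σ : Equiv.Perm (Fin n), (P {ω | Ysig ν σ X ω ≤ y}).toReal :=
  statement1_general P ν X hmeas hindep μ hac hdist y

end ChoquetPaper
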